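/- The ×-homotopy fundamental group of the hypercube H(d,2), based at any vertex, is trivial. -/

import Mathlib

/-!
Every step of a walk in the hypercube flips one coordinate, and a closed walk flips each
coordinate an even number of times. Let the first step flip coordinate `i`. A step flipping
another coordinate `k` spans a square with it, so a spider move exchanges the two steps; in
this way the flip of `i` is pushed forward until it meets the next flip of `i`, which in
`{0,1}` undoes it, and the resulting backtrack `u v u` is pruned. The walk gets two steps
shorter, and induction on its length reduces it to the trivial walk.
-/

/-- The Hamming graph `H(d,q)`: vertices are functions `Fin d → Fin q`,
adjacent iff they differ in exactly one coordinate. -/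
def hammingGraph (d q : ℕ) : SimpleGraph (Fin d → Fin q) where
  Adj v w := ∃! i, v i ≠ w i
  symm := by
    constructor
    rintro v w ⟨i, hi, hu⟩
    exact ⟨i, hi.symm, fun j hj => hu j hj.symm⟩
  loopless := by
    constructor
    rintro v ⟨i, hi, -⟩
    exact hi rfl

/-- `l` is (the list of vertices of) a walk in `G` from `a` to `b`. -/
def IsWalkOn {V : Type*} (G : SimpleGraph V) (a b : V) (l : List V) : Prop :=
  l.Chain' G.Adj ∧ l.head? = some a ∧ l.getLast? = some b

/-- Elementary moves on walks: prunes (and their inverses, anti-prunes,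
via symmetry) and spider moves. -/
inductive Move {V : Type*} (G : SimpleGraph V) : List V → List V → Prop
  | prune (xs ys : List V) (u v : V) (huv : G.Adj u v) :
      Move G (xs ++ u :: v :: u :: ys) (xs ++ u :: ys)
  | spider (xs ys : List V) (u v v' w : V) (hne : v ≠ v')
      (h1 : G.Adj u v') (h2 : G.Adj v' w) :
      Move G (xs ++ u :: v :: w :: ys) (xs ++ u :: v' :: w :: ys)

/-- ×-homotopy rel endpoints: the equivalence relation generated by prunes,
anti-prunes and spider moves. -/
def Homotopic {V : Type*} (G : SimpleGraph V) : List V → List V → Prop :=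
  Relation.EqvGen (Move G)

/-- Concatenation of walks sharing an endpoint. -/
def wcat {V : Type*} (l1 l2 : List V) : List V := l1 ++ l2.tail

/-- Concatenation of a list of closed walks based at `z`. -/
def wprod {V : Type*} (z : V) (ws : List (List V)) : List V := ws.foldr wcat [z]

/-- `u` and `v` differ exactly in coordinate `i`. -/
def DiffAt {d q : ℕ} (u v : Fin d → Fin q) (i : Fin d) : Prop :=
  u i ≠ v i ∧ ∀ j, j ≠ i → u j = v j

/-- A ground walk in coordinate `i`: a closed 3-walk at the all-zeros vertex
whose intermediate vertices are nonzero only in coordinate `i`. -/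
def IsGroundWalk (d q : ℕ) [NeZero q] (i : Fin d) (l : List (Fin d → Fin q)) : Prop :=
  ∃ a b : Fin q, a ≠ 0 ∧ b ≠ 0 ∧ a ≠ b ∧
    l = [(0 : Fin d → Fin q), Function.update (0 : Fin d → Fin q) i a,
      Function.update (0 : Fin d → Fin q) i b, 0]

/-- Number of steps of a walk in which coordinate `i` changes. -/
def changeCount {d q : ℕ} (i : Fin d) : List (Fin d → Fin q) → ℕ
  | x :: y :: rest => (if x i = y i then 0 else 1) + changeCount i (y :: rest)
  | _ => 0

section Walks

variable {V : Type*} {G : SimpleGraph V}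

theorem Move.cons (u : V) {l₁ l₂ : List V} : Move G l₁ l₂ → Move G (u :: l₁) (u :: l₂)
  | .prune xs ys a b hab => .prune (u :: xs) ys a b hab
  | .spider xs ys a b b' c hne h₁ h₂ => .spider (u :: xs) ys a b b' c hne h₁ h₂

theorem Homotopic.cons (u : V) {l₁ l₂ : List V} (h : Homotopic G l₁ l₂) :
    Homotopic G (u :: l₁) (u :: l₂) := by
  induction h with
  | rel _ _ hab => exact .rel _ _ (hab.cons u)
  | refl => exact .refl _
  | symm _ _ _ ih => exact .symm _ _ ih
  | trans _ _ _ _ _ ih₁ ih₂ => exact .trans _ _ _ ih₁ ih₂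

theorem IsWalkOn.of_cons {a x b : V} {l : List V} (h : IsWalkOn G a b (a :: x :: l)) :
    IsWalkOn G x b (x :: l) :=
  ⟨h.1.tail, rfl, by simpa [List.getLast?_cons_cons] using h.2.2⟩

theorem IsWalkOn.cons {a x b : V} {l : List V} (hax : G.Adj a x) (h : IsWalkOn G x b (x :: l)) :
    IsWalkOn G a b (a :: x :: l) :=
  ⟨h.1.cons_cons hax, rfl, by simpa [List.getLast?_cons_cons] using h.2.2⟩

end Walks

section Hamming

variable {d q : ℕ}

theorem hammingGraph_adj_iff {u v : Fin d → Fin q} :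
    (hammingGraph d q).Adj u v ↔ ∃ i, DiffAt u v i := by
  refine exists_congr fun i => and_congr_right fun _ => forall_congr' fun j => ?_
  rw [not_imp_comm]

theorem DiffAt.symm {u v : Fin d → Fin q} {i : Fin d} (h : DiffAt u v i) : DiffAt v u i :=
  ⟨h.1.symm, fun j hj => (h.2 j hj).symm⟩

theorem DiffAt.adj {u v : Fin d → Fin q} {i : Fin d} (h : DiffAt u v i) :
    (hammingGraph d q).Adj u v :=
  hammingGraph_adj_iff.2 ⟨i, h⟩

theorem DiffAt.exists_swap {u v w : Fin d → Fin q} {i k : Fin d}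
    (huv : DiffAt u v i) (hvw : DiffAt v w k) (hik : i ≠ k) :
    ∃ v', v ≠ v' ∧ DiffAt u v' k ∧ DiffAt v' w i := by
  have hv'i : Function.update u k (w k) i = u i := Function.update_of_ne hik _ _
  refine ⟨Function.update u k (w k), fun h => huv.1 (by rw [h, hv'i]), ?_, ?_⟩
  · refine ⟨?_, fun j hj => (Function.update_of_ne hj _ _).symm⟩
    rw [Function.update_self, huv.2 k hik.symm]
    exact hvw.1
  · refine ⟨by rw [hv'i, ← hvw.2 i hik]; exact huv.1, fun j hj => ?_⟩
    rcases eq_or_ne j k with rfl | hjk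
    · exact Function.update_self _ _ _
    · rw [Function.update_of_ne hjk, huv.2 j hj, hvw.2 j hjk]

theorem DiffAt.eq_of_diffAt {u v w : Fin d → Fin 2} {i : Fin d}
    (hvu : DiffAt v u i) (hvw : DiffAt v w i) : u = w := by
  funext j
  by_cases hj : j = i
  · subst hj
    have := hvu.1
    have := hvw.1
    omega
  · rw [← hvu.2 j hj, hvw.2 j hj]

end Hamming

theorem exists_shorter_homotopic_of_diffAt {d : ℕ} {u v z : Fin d → Fin 2} {i : Fin d}
    {l : List (Fin d → Fin 2)} (huv : DiffAt u v i)
    (hl : IsWalkOn (hammingGraph d 2) u z (u :: v :: l)) (hz : z i = u i) :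
    ∃ m, Homotopic (hammingGraph d 2) (u :: v :: l) (u :: m) ∧
      IsWalkOn (hammingGraph d 2) u z (u :: m) ∧ m.length + 1 = l.length := by
  induction l generalizing u v with
  | nil =>
    obtain rfl : v = z := by simpa using hl.2.2
    exact absurd hz.symm huv.1
  | cons w l ih =>
    obtain ⟨k, hvw⟩ := hammingGraph_adj_iff.1 hl.of_cons.1.rel
    by_cases hik : i = k
    · subst hik
      obtain rfl := huv.symm.eq_of_diffAt hvw
      exact ⟨l, .rel _ _ (.prune [] l u v huv.adj), hl.of_cons.of_cons, rfl⟩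
    · obtain ⟨v', hvv', huv', hv'w⟩ := huv.exists_swap hvw hik
      obtain ⟨m, hm, hmwalk, hmlen⟩ :=
        ih hv'w (hl.of_cons.of_cons.cons hv'w.adj) (hz.trans (huv'.2 i hik))
      refine ⟨v' :: m, ?_, hmwalk.cons huv'.adj, by simp [hmlen]⟩
      exact .trans _ _ _ (.rel _ _ (.spider [] l u v v' w hvv' huv'.adj hv'w.adj)) (hm.cons u)

/-- the ×-homotopy fundamental group of the hypercube `H(d,2)`, based
at any vertex, is trivial: every closed walk is homotopic to the trivial walk. -/
theorem stmt6 (d : ℕ) (v : Fin d → Fin 2) (l : List (Fin d → Fin 2))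
    (hl : IsWalkOn (hammingGraph d 2) v v l) :
    Homotopic (hammingGraph d 2) l [v] := by
  induction hn : l.length using Nat.strong_induction_on generalizing l with
  | _ n ih =>
    rcases l with _ | ⟨x, _ | ⟨y, l⟩⟩
    · simp [IsWalkOn] at hl
    · obtain rfl : x = v := by simpa using hl.2.1
      exact .refl _
    · obtain rfl : x = v := by simpa using hl.2.1
      obtain ⟨i, hxy⟩ := hammingGraph_adj_iff.1 hl.1.rel
      obtain ⟨m, hm, hmwalk, hmlen⟩ := exists_shorter_homotopic_of_diffAt hxy hl rfl
      exact .trans _ _ _ hm (ih _ (by simp [← hn, ← hmlen]) _ hmwalk rfl)
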